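/- With L given entrywise by L_{t',t} = Q_t^{1/2} ℓ_{t',t} (ℓ_{t,t}=1, ℓ_{t',t} = F_{t'}(∏_{l=t+1}^{t'} G_l) K_t for t' > t), the following forward recursion computes x = L x̃ for any x̃ ∈ ℝᴺ: x₁ = F₁ b₁ + Q₁^{1/2} x̃₁ and m̃₁ = b₁ + K₁(x₁ − F₁ b₁); for t = 2,…,N: b_t = G_t m̃_{t−1}, x_t = F_t b_t + Q_t^{1/2} x̃_t, m̃_t = b_t + K_t(x_t − F_t b_t), where b₁ = 0. -/

import Mathlib

open Matrix

/-- Product `G_s G_{s-1} ⋯ G_{t+1}` of transition matrices (empty product = 1). -/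
noncomputable def transProd {q : ℕ} (G : ℕ → Matrix (Fin q) (Fin q) ℝ) (t s : ℕ) :
    Matrix (Fin q) (Fin q) ℝ :=
  ((List.range (s - t)).map (fun i => G (s - i))).prod

/-- Forward recursion of Lemma 2 (inverse Kalman filter computation of `L x̃`), 0-based:
`ikfFwd … t = (x_t, m̃_t)`, with `b₀ = 0`, `x₀ = F₀ b₀ + Q₀^{1/2} x̃₀`,
`m̃₀ = b₀ + K₀ (x₀ − F₀ b₀)`, and for `t ≥ 1`: `b_t = G_t m̃_{t−1}`,
`x_t = F_t b_t + Q_t^{1/2} x̃_t`, `m̃_t = b_t + K_t (x_t − F_t b_t)`. -/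
noncomputable def ikfFwd {q : ℕ} (F : ℕ → Fin q → ℝ) (G : ℕ → Matrix (Fin q) (Fin q) ℝ)
    (K : ℕ → Fin q → ℝ) (Q xt : ℕ → ℝ) : ℕ → ℝ × (Fin q → ℝ)
  | 0 =>
      let b : Fin q → ℝ := 0
      let x := F 0 ⬝ᵥ b + Real.sqrt (Q 0) * xt 0
      (x, b + (x - F 0 ⬝ᵥ b) • K 0)
  | t + 1 =>
      let b := G (t + 1) *ᵥ (ikfFwd F G K Q xt t).2
      let x := F (t + 1) ⬝ᵥ b + Real.sqrt (Q (t + 1)) * xt (t + 1)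
      (x, b + (x - F (t + 1) ⬝ᵥ b) • K (t + 1))

lemma transProd_self {q : ℕ} (G : ℕ → Matrix (Fin q) (Fin q) ℝ) (t : ℕ) :
    transProd G t t = 1 := by
  simp [transProd]

lemma transProd_succ {q : ℕ} (G : ℕ → Matrix (Fin q) (Fin q) ℝ) {t s : ℕ} (h : t ≤ s) :
    transProd G t (s + 1) = G (s + 1) * transProd G t s := by
  unfold transProd
  rw [show s + 1 - t = (s - t) + 1 by omega, List.range_succ_eq_map]
  simp only [List.map_cons, List.map_map, List.prod_cons, Nat.sub_zero]
  congr 1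
  refine congrArg List.prod (List.map_congr_left fun i hi => ?_)
  exact congrArg G (by omega)

lemma mulVec_sum' {q : ℕ} (A : Matrix (Fin q) (Fin q) ℝ) {ι : Type*} (s : Finset ι)
    (f : ι → Fin q → ℝ) : A *ᵥ (∑ i ∈ s, f i) = ∑ i ∈ s, A *ᵥ f i := by
  simpa only [Matrix.mulVecLin_apply] using map_sum (Matrix.mulVecLin A) f s

lemma dotProduct_sum' {q : ℕ} (v : Fin q → ℝ) {ι : Type*} (s : Finset ι)
    (f : ι → Fin q → ℝ) : v ⬝ᵥ (∑ i ∈ s, f i) = ∑ i ∈ s, v ⬝ᵥ f i := by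
  classical
  induction s using Finset.induction with
  | empty => simp
  | insert _ _ h ih => rw [Finset.sum_insert h, Finset.sum_insert h, dotProduct_add, ih]

lemma ikf_snd {q : ℕ} (F : ℕ → Fin q → ℝ) (G : ℕ → Matrix (Fin q) (Fin q) ℝ)
    (K : ℕ → Fin q → ℝ) (Q xt : ℕ → ℝ) (s : ℕ) :
    (ikfFwd F G K Q xt s).2
      = ∑ u ∈ Finset.range (s + 1),
          (Real.sqrt (Q u) * xt u) • (transProd G u s *ᵥ K u) := by
  induction s with
  | zero =>
      simp [ikfFwd, transProd_self]
  | succ r ih =>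
      rw [Finset.sum_range_succ]
      simp only [ikfFwd, ih]
      rw [transProd_self]
      have hb : G (r + 1) *ᵥ (∑ u ∈ Finset.range (r + 1),
          (Real.sqrt (Q u) * xt u) • (transProd G u r *ᵥ K u))
          = ∑ u ∈ Finset.range (r + 1),
            (Real.sqrt (Q u) * xt u) • (transProd G u (r + 1) *ᵥ K u) := by
        rw [mulVec_sum']
        apply Finset.sum_congr rfl
        intro u hu
        rw [Matrix.mulVec_smul, Matrix.mulVec_mulVec,
          ← transProd_succ G (Nat.lt_succ_iff.mp (Finset.mem_range.mp hu))]
      rw [hb]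
      simp [Matrix.one_mulVec]

lemma ikf_fst {q : ℕ} (F : ℕ → Fin q → ℝ) (G : ℕ → Matrix (Fin q) (Fin q) ℝ)
    (K : ℕ → Fin q → ℝ) (Q xt : ℕ → ℝ) (s : ℕ) :
    (ikfFwd F G K Q xt s).1
      = (∑ u ∈ Finset.range s,
          (Real.sqrt (Q u) * (F s ⬝ᵥ (transProd G u s *ᵥ K u))) * xt u)
        + Real.sqrt (Q s) * xt s := by
  cases s with
  | zero => simp [ikfFwd]
  | succ r =>
      simp only [ikfFwd, ikf_snd]
      congr 1
      have hb : G (r + 1) *ᵥ (∑ u ∈ Finset.range (r + 1),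
          (Real.sqrt (Q u) * xt u) • (transProd G u r *ᵥ K u))
          = ∑ u ∈ Finset.range (r + 1),
            (Real.sqrt (Q u) * xt u) • (transProd G u (r + 1) *ᵥ K u) := by
        rw [mulVec_sum']
        apply Finset.sum_congr rfl
        intro u hu
        rw [Matrix.mulVec_smul, Matrix.mulVec_mulVec,
          ← transProd_succ G (Nat.lt_succ_iff.mp (Finset.mem_range.mp hu))]
      rw [hb, dotProduct_sum']
      apply Finset.sum_congr rfl
      intro u _
      rw [dotProduct_smul]
      simp [smul_eq_mul]; ring

/-- Lemma 2 of the paper: with `L` given entrywise by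
`L_{t',t} = Q_t^{1/2} ℓ_{t',t}` (`ℓ_{t,t} = 1`, `ℓ_{t',t} = F_{t'}(∏_{l=t+1}^{t'} G_l) K_t`
for `t' > t`), the forward recursion computes `x = L x̃` for any `x̃`. -/
theorem ikf_mulVec {N q : ℕ}
    (F : ℕ → Fin q → ℝ) (G : ℕ → Matrix (Fin q) (Fin q) ℝ)
    (K : ℕ → Fin q → ℝ) (Q : ℕ → ℝ) (hQ : ∀ t, 0 < Q t)
    (L : Matrix (Fin N) (Fin N) ℝ)
    (hL : ∀ t' t : Fin N, L t' t =
      if (t : ℕ) < (t' : ℕ) then Real.sqrt (Q t) * (F t' ⬝ᵥ (transProd G t t' *ᵥ K t))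
      else if (t : ℕ) = (t' : ℕ) then Real.sqrt (Q t) else 0)
    (xt : ℕ → ℝ) :
    ∀ t : Fin N, (L *ᵥ fun i : Fin N => xt i) t = (ikfFwd F G K Q xt t).1 := by
  intro t
  set f : ℕ → ℝ := fun i =>
    (if i < (t : ℕ) then Real.sqrt (Q i) * (F t ⬝ᵥ (transProd G i t *ᵥ K i))
     else if i = (t : ℕ) then Real.sqrt (Q i) else 0) * xt i with hf
  have hLHS : (L *ᵥ fun i : Fin N => xt i) t = ∑ j : Fin N, f j := by
    simp only [Matrix.mulVec, dotProduct]
    apply Finset.sum_congr rfl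
    intro j _
    rw [hL t j, hf]
  rw [hLHS, Fin.sum_univ_eq_sum_range f N]
  have hsub : ∑ i ∈ Finset.range N, f i = ∑ i ∈ Finset.range ((t : ℕ) + 1), f i := by
    symm
    apply Finset.sum_subset
    · intro i hi
      simp only [Finset.mem_range] at *
      omega
    · intro i _ hi
      simp only [Finset.mem_range] at hi
      have h1 : ¬ i < (t : ℕ) := by omega
      have h2 : i ≠ (t : ℕ) := by omega
      simp [hf, h1, h2]
  rw [hsub, Finset.sum_range_succ, ikf_fst]
  congr 1
  · apply Finset.sum_congr rfl
    intro i hi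
    have h1 : i < (t : ℕ) := Finset.mem_range.mp hi
    simp [hf, h1]
  · simp [hf]
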